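/- arXiv:0705.3629 — 2 statements merged into one kernel-verified Lean document; each statement's English description precedes it below -/
import Mathlib

section
/- Let f : ℝ → ℝ be convex and continuously differentiable, and let B, X be n×n Hermitian complex matrices. Then Tr f(B+X) − Tr f(B) − Tr(X · f′(B)) ≥ 0, where f′ is the derivative of f. -/
/-!
Write `B + X = U diag(λ) U*` and `B = V diag(μ) V*`. The overlaps `c i j = |⟨uᵢ, vⱼ⟩|²` of the
two eigenbases form a doubly stochastic matrix, and in terms of them
`Tr f(B+X) - Tr f(B) - Tr(X f′(B)) = ∑ i j, c i j * (f λᵢ - f μⱼ - f′ μⱼ * (λᵢ - μⱼ))`,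
where every summand is nonnegative by the tangent-line inequality for the convex function `f`.
-/

/-- `g` applied to a Hermitian matrix through a spectral decomposition
(continuous functional calculus): `g(B) = U · diag(g(λᵢ)) · U*`. -/
noncomputable def IsHermitian.applyFun {n : ℕ} {B : Matrix (Fin n) (Fin n) ℂ}
    (hB : B.IsHermitian) (g : ℝ → ℝ) : Matrix (Fin n) (Fin n) ℂ :=
  (hB.eigenvectorUnitary : Matrix (Fin n) (Fin n) ℂ) *
    Matrix.diagonal (fun i => (g (hB.eigenvalues i) : ℂ)) *
    star (hB.eigenvectorUnitary : Matrix (Fin n) (Fin n) ℂ)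

open Finset Matrix

theorem ConvexOn.deriv_mul_sub_le_sub {S : Set ℝ} {f : ℝ → ℝ} {x y : ℝ}
    (hf : ConvexOn ℝ S f) (hx : x ∈ S) (hy : y ∈ S) (hfd : DifferentiableAt ℝ f y) :
    deriv f y * (x - y) ≤ f x - f y := by
  rcases lt_trichotomy x y with hxy | rfl | hxy
  · have := hf.slope_le_deriv hx hy hxy hfd
    rw [slope_def_field, div_le_iff₀ (sub_pos.2 hxy)] at this
    linarith
  · simp
  · have := hf.deriv_le_slope hy hx hxy hfd
    rw [slope_def_field, le_div_iff₀ (sub_pos.2 hxy)] at this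
    linarith

theorem ConvexOn.sum_mul_sub_mul_deriv_le_sum_sub_sum {ι : Type*} [Fintype ι] [DecidableEq ι]
    {S : Set ℝ} {f : ℝ → ℝ} (hf : ConvexOn ℝ S f) {C : Matrix ι ι ℝ}
    (hC : C ∈ doublyStochastic ℝ ι) {a b : ι → ℝ} (ha : ∀ i, a i ∈ S) (hb : ∀ j, b j ∈ S)
    (hfd : ∀ j, DifferentiableAt ℝ f (b j)) :
    ∑ i, ∑ j, C i j * (a i - b j) * deriv f (b j) ≤ ∑ i, f (a i) - ∑ j, f (b j) :=
  calc ∑ i, ∑ j, C i j * (a i - b j) * deriv f (b j)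
      ≤ ∑ i, ∑ j, C i j * (f (a i) - f (b j)) := by
        refine sum_le_sum fun i _ => sum_le_sum fun j _ => ?_
        rw [mul_assoc, mul_comm (a i - b j)]
        exact mul_le_mul_of_nonneg_left (hf.deriv_mul_sub_le_sub (ha i) (hb j) (hfd j))
          (nonneg_of_mem_doublyStochastic hC)
    _ = ∑ i, f (a i) - ∑ j, f (b j) := by
        simp only [mul_sub, sum_sub_distrib, ← sum_mul, sum_row_of_mem_doublyStochastic hC,
          one_mul]
        rw [sum_comm]
        simp only [← sum_mul, sum_col_of_mem_doublyStochastic hC, one_mul]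

namespace Matrix

variable {𝕜 ι : Type*} [RCLike 𝕜] [Fintype ι] [DecidableEq ι]

theorem sum_norm_sq_row_of_mem_unitaryGroup {U : Matrix ι ι 𝕜} (hU : U ∈ unitaryGroup ι 𝕜)
    (i : ι) : ∑ j, ‖U i j‖ ^ 2 = 1 := by
  have h : (U * star U) i i = 1 := by rw [Unitary.mul_star_self_of_mem hU, one_apply_eq]
  simp only [mul_apply, star_apply, ← starRingEnd_apply, RCLike.mul_conj] at h
  exact_mod_cast h

theorem norm_sq_entries_mem_doublyStochastic {U : Matrix ι ι 𝕜} (hU : U ∈ unitaryGroup ι 𝕜) :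
    of (fun i j => ‖U i j‖ ^ 2) ∈ doublyStochastic ℝ ι := by
  refine mem_doublyStochastic_iff_sum.2 ⟨fun i j => by simp only [of_apply]; positivity,
    sum_norm_sq_row_of_mem_unitaryGroup hU, fun j => ?_⟩
  simpa [star_apply] using sum_norm_sq_row_of_mem_unitaryGroup (Unitary.star_mem hU) j

theorem trace_diagonal_mul_mul_diagonal_mul_star (M : Matrix ι ι ℂ) (d e : ι → ℝ) :
    (diagonal (fun i => (d i : ℂ)) * M * diagonal (fun j => (e j : ℂ)) * star M).trace
      = ((∑ i, ∑ j, ‖M i j‖ ^ 2 * d i * e j : ℝ) : ℂ) := by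
  simp only [trace, diag_apply, mul_apply, diagonal_apply, star_apply, ite_mul, mul_ite,
    zero_mul, mul_zero, sum_ite_eq, sum_ite_eq', mem_univ, if_true]
  push_cast
  refine sum_congr rfl fun i _ => sum_congr rfl fun j _ => ?_
  rw [← Complex.mul_conj', Complex.star_def]
  ring

namespace IsHermitian

variable {A B : Matrix ι ι 𝕜}

noncomputable def eigenOverlap (hA : A.IsHermitian) (hB : B.IsHermitian) : Matrix ι ι ℝ :=
  of fun i j => ‖(star (hA.eigenvectorUnitary : Matrix ι ι 𝕜) * hB.eigenvectorUnitary) i j‖ ^ 2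

theorem eigenOverlap_mem_doublyStochastic (hA : A.IsHermitian) (hB : B.IsHermitian) :
    hA.eigenOverlap hB ∈ doublyStochastic ℝ ι :=
  norm_sq_entries_mem_doublyStochastic (star hA.eigenvectorUnitary * hB.eigenvectorUnitary).prop

theorem eigenOverlap_self (hA : A.IsHermitian) : hA.eigenOverlap hA = 1 := by
  ext i j
  rw [eigenOverlap, of_apply, Unitary.star_mul_self_of_mem hA.eigenvectorUnitary.prop, one_apply,
    one_apply]
  split_ifs <;> simp

end IsHermitian

end Matrix

namespace Matrix.IsHermitian

variable {n : ℕ} {A B : Matrix (Fin n) (Fin n) ℂ}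

theorem re_trace_mul_applyFun (hA : A.IsHermitian) (hB : B.IsHermitian) (g : ℝ → ℝ) :
    (A * IsHermitian.applyFun hB g).trace.re
      = ∑ i, ∑ j, hA.eigenOverlap hB i j * hA.eigenvalues i * g (hB.eigenvalues j) := by
  set U : Matrix (Fin n) (Fin n) ℂ := ↑hA.eigenvectorUnitary
  set V : Matrix (Fin n) (Fin n) ℂ := ↑hB.eigenvectorUnitary
  have hA' : A = U * diagonal (fun i => (hA.eigenvalues i : ℂ)) * star U := hA.spectral_theorem
  have hcycle : (A * IsHermitian.applyFun hB g).trace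
      = (diagonal (fun i => (hA.eigenvalues i : ℂ)) * (star U * V) *
          diagonal (fun j => (g (hB.eigenvalues j) : ℂ)) * star (star U * V)).trace := by
    nth_rw 1 [hA']
    rw [IsHermitian.applyFun, star_mul, star_star]
    simp only [Matrix.mul_assoc]
    rw [trace_mul_comm]
    simp only [Matrix.mul_assoc]
    rfl
  rw [hcycle, trace_diagonal_mul_mul_diagonal_mul_star, Complex.ofReal_re]
  rfl

theorem re_trace_sub_mul_applyFun (hA : A.IsHermitian) (hB : B.IsHermitian) (g : ℝ → ℝ) :
    ((A - B) * IsHermitian.applyFun hB g).trace.re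
      = ∑ i, ∑ j, hA.eigenOverlap hB i j * (hA.eigenvalues i - hB.eigenvalues j) *
          g (hB.eigenvalues j) := by
  have hdiag : ∑ i, ∑ j, hB.eigenOverlap hB i j * hB.eigenvalues i * g (hB.eigenvalues j)
      = ∑ i, ∑ j, hA.eigenOverlap hB i j * hB.eigenvalues j * g (hB.eigenvalues j) := by
    calc _ = ∑ j, hB.eigenvalues j * g (hB.eigenvalues j) := by
          simp only [eigenOverlap_self, one_apply, ite_mul, one_mul, zero_mul, sum_ite_eq, mem_univ,
            ↓reduceIte]
      _ = _ := by
          rw [sum_comm]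
          simp only [mul_assoc, ← sum_mul,
            sum_col_of_mem_doublyStochastic (hA.eigenOverlap_mem_doublyStochastic hB), one_mul]
  rw [Matrix.sub_mul, trace_sub, Complex.sub_re, hA.re_trace_mul_applyFun, hB.re_trace_mul_applyFun,
    hdiag, ← sum_sub_distrib]
  refine sum_congr rfl fun i _ => ?_
  rw [← sum_sub_distrib]
  exact sum_congr rfl fun j _ => by ring

end Matrix.IsHermitian

theorem trace_convexity_ineq_general {n : ℕ} (f : ℝ → ℝ)
    (hconv : ConvexOn ℝ Set.univ f) (hf : ContDiff ℝ 1 f)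
    (B X : Matrix (Fin n) (Fin n) ℂ) (hB : B.IsHermitian)
    (hBX : (B + X).IsHermitian) :
    0 ≤ (∑ i, f (hBX.eigenvalues i)) - (∑ i, f (hB.eigenvalues i))
        - (Matrix.trace (X * IsHermitian.applyFun hB (deriv f))).re := by
  have htrace := hBX.re_trace_sub_mul_applyFun hB (deriv f)
  rw [add_sub_cancel_left] at htrace
  rw [htrace, sub_nonneg]
  exact hconv.sum_mul_sub_mul_deriv_le_sum_sub_sum (hBX.eigenOverlap_mem_doublyStochastic hB)
    (fun _ => Set.mem_univ _) (fun _ => Set.mem_univ _)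
    (fun _ => (hf.differentiable one_ne_zero).differentiableAt)

/-- For convex `C¹` functions `f` and Hermitian matrices `B`, `X`:
`Tr f(B+X) − Tr f(B) − Tr(X·f′(B)) ≥ 0`, where `Tr f(A) = ∑ᵢ f(λᵢ(A))`. -/
theorem trace_convexity_ineq {n : ℕ} (f : ℝ → ℝ)
    (hconv : ConvexOn ℝ Set.univ f) (hf : ContDiff ℝ 1 f)
    (B X : Matrix (Fin n) (Fin n) ℂ) (hB : B.IsHermitian) (hX : X.IsHermitian)
    (hBX : (B + X).IsHermitian) :
    0 ≤ (∑ i, f (hBX.eigenvalues i)) - (∑ i, f (hB.eigenvalues i))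
        - (Matrix.trace (X * IsHermitian.applyFun hB (deriv f))).re :=
  trace_convexity_ineq_general f hconv hf B X hB hBX
end

section
/- (Koplienko trace formula, finite-dimensional case.) Let A, B be n×n Hermitian complex matrices, X = A − B, let (ψ_k)_{k=1}^n be an orthonormal basis of ℂⁿ with Bψ_k = b_k ψ_k (b_k ∈ ℝ), and let a_1,…,a_n be the eigenvalues of A counted with multiplicity. Define η : ℝ → ℝ by η(λ) = ∑_{k : b_k < λ} ⟨ψ_k, Xψ_k⟩ − ∑_{j=1}^n [ (λ − b_j)₊ − (λ − a_j)₊ ]. Then η(λ) = 0 whenever λ ≤ min or λ > max of all eigenvalues of A and B, and for every twice continuously differentiable f : ℝ → ℝ, Tr f(A) − Tr f(B) − Tr(X · f′(B)) = ∫_ℝ f″(λ) η(λ) dλ. -/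
open Matrix

/-! Write `x_k = ⟨ψ_k, Xψ_k⟩`. Pairing `a_k` with `b_k`, the shift function is a sum of
elementary pieces `[b_k < λ] x_k − ((λ − b_k)₊ − (λ − a_k)₊)`, and on an interval `[m, M]`
containing all eigenvalues the integral of `f″` against each piece reduces to
`∫_b^M f″ = f′(M) − f′(b)` and `∫_c^M f″(λ)(λ − c) dλ = f′(M)(M − c) − f(M) + f(c)`.
The terms at `M` cancel because `∑ x_k = Tr X = ∑ a_k − ∑ b_k`; the same identity makes `η`
vanish to the right of the spectra. Finally `Tr(X f′(B)) = ∑ f′(b_k) x_k`, since `ψ_k` is an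
eigenvector of `f′(B)` with eigenvalue `f′(b_k)`. -/

open MeasureTheory Set

namespace Matrix

variable {ι R : Type*} [Fintype ι]

theorem trace_eq_sum_star_dotProduct_mulVec [DecidableEq ι] [CommRing R] [StarRing R]
    (ψ : ι → ι → R)
    (hψ : ∀ k l, star (ψ k) ⬝ᵥ ψ l = if k = l then (1 : R) else 0) (M : Matrix ι ι R) :
    M.trace = ∑ k, star (ψ k) ⬝ᵥ (M *ᵥ ψ k) := by
  set P : Matrix ι ι R := (of ψ)ᵀ
  have hPP : star P * P = 1 := by
    ext k l
    simpa [mul_apply, one_apply, P, dotProduct] using hψ k l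
  calc M.trace = (M * (P * star P)).trace := by rw [mul_eq_one_comm.mp hPP, mul_one]
    _ = (star P * (M * P)).trace := by rw [← mul_assoc, trace_mul_comm]
    _ = ∑ k, star (ψ k) ⬝ᵥ (M *ᵥ ψ k) := by
        simp only [trace, diag, mul_apply, dotProduct, mulVec, P, star_apply, transpose_apply,
          of_apply, Finset.mul_sum, Pi.star_apply]

theorem trace_eq_sum_of_orthonormal_eigenbasis [DecidableEq ι] [CommRing R] [StarRing R]
    {B : Matrix ι ι R} (ψ : ι → ι → R) (b : ι → R)
    (hψ : ∀ k l, star (ψ k) ⬝ᵥ ψ l = if k = l then (1 : R) else 0)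
    (hB : ∀ k, B *ᵥ ψ k = b k • ψ k) :
    B.trace = ∑ k, b k := by
  rw [trace_eq_sum_star_dotProduct_mulVec ψ hψ]
  refine Finset.sum_congr rfl fun k _ => ?_
  rw [hB, dotProduct_smul, hψ, if_pos rfl, smul_eq_mul, mul_one]

theorem IsHermitian.ofReal_re_star_dotProduct_mulVec {X : Matrix ι ι ℂ} (hX : X.IsHermitian)
    (v : ι → ℂ) : (((star v ⬝ᵥ X *ᵥ v).re : ℝ) : ℂ) = star v ⬝ᵥ X *ᵥ v :=
  Complex.ext rfl (by simpa using (hX.im_star_dotProduct_mulVec_self v).symm)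

theorem diagonal_comp_mulVec_of_mulVec_eq_smul [DecidableEq ι] {d : ι → ℝ} {w : ι → ℂ} {c : ℝ}
    (g : ℝ → ℝ)
    (h : diagonal (fun i => (d i : ℂ)) *ᵥ w = (c : ℂ) • w) :
    diagonal (fun i => (g (d i) : ℂ)) *ᵥ w = (g c : ℂ) • w := by
  funext i
  have hi : ((d i : ℂ) - c) * w i = 0 := by
    simpa [mulVec_diagonal, sub_mul, sub_eq_zero] using congrFun h i
  rcases mul_eq_zero.mp hi with hdc | hw
  · simp [mulVec_diagonal, show d i = c by exact_mod_cast sub_eq_zero.mp hdc]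
  · simp [mulVec_diagonal, hw]

end Matrix

theorem IsHermitian.applyFun_mulVec_of_mulVec_eq_smul {n : ℕ} {B : Matrix (Fin n) (Fin n) ℂ}
    (hB : B.IsHermitian) (g : ℝ → ℝ) {v : Fin n → ℂ} {c : ℝ} (hv : B *ᵥ v = (c : ℂ) • v) :
    IsHermitian.applyFun hB g *ᵥ v = (g c : ℂ) • v := by
  set U : Matrix (Fin n) (Fin n) ℂ := (hB.eigenvectorUnitary : Matrix (Fin n) (Fin n) ℂ)
  have hUU : star U * U = 1 := mem_unitaryGroup_iff'.mp hB.eigenvectorUnitary.2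
  have hUU' : U * star U = 1 := mem_unitaryGroup_iff.mp hB.eigenvectorUnitary.2
  have hdiag : diagonal (fun i => (hB.eigenvalues i : ℂ)) *ᵥ (star U *ᵥ v)
      = (c : ℂ) • (star U *ᵥ v) := by
    have hspec : star U * B = diagonal (fun i => (hB.eigenvalues i : ℂ)) * star U := by
      conv_lhs => rw [hB.spectral_theorem, Unitary.conjStarAlgAut_apply]
      rw [← mul_assoc, ← mul_assoc, hUU, one_mul]
      rfl
    rw [mulVec_mulVec, ← hspec, ← mulVec_mulVec, hv, mulVec_smul]
  rw [IsHermitian.applyFun, ← mulVec_mulVec, ← mulVec_mulVec,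
    diagonal_comp_mulVec_of_mulVec_eq_smul g hdiag, mulVec_smul, mulVec_mulVec, hUU', one_mulVec]

theorem IsHermitian.trace_mul_applyFun {n : ℕ} {B : Matrix (Fin n) (Fin n) ℂ}
    (hB : B.IsHermitian) (X : Matrix (Fin n) (Fin n) ℂ) (g : ℝ → ℝ)
    (ψ : Fin n → Fin n → ℂ) (b : Fin n → ℝ)
    (hψ : ∀ k l, star (ψ k) ⬝ᵥ ψ l = if k = l then (1 : ℂ) else 0)
    (heig : ∀ k, B *ᵥ ψ k = (b k : ℂ) • ψ k) :
    (X * IsHermitian.applyFun hB g).trace = ∑ k, (g (b k) : ℂ) * (star (ψ k) ⬝ᵥ X *ᵥ ψ k) := by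
  rw [trace_eq_sum_star_dotProduct_mulVec ψ hψ]
  refine Finset.sum_congr rfl fun k _ => ?_
  rw [← mulVec_mulVec, IsHermitian.applyFun_mulVec_of_mulVec_eq_smul hB g (heig k), mulVec_smul,
    dotProduct_smul, smul_eq_mul]

section Calculus

variable {f g : ℝ → ℝ} {m M c : ℝ}

theorem integral_deriv_deriv_eq_sub (hf : ContDiff ℝ 2 f) (c M : ℝ) :
    ∫ t in c..M, deriv (deriv f) t = deriv f M - deriv f c :=
  intervalIntegral.integral_deriv_eq_sub
    (fun t _ => (hf.deriv' (n := 1)).differentiable one_ne_zero t)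
    ((hf.iterate_deriv' 0 2).continuous.intervalIntegrable c M)

theorem integral_deriv_deriv_mul_sub (hf : ContDiff ℝ 2 f) (c M : ℝ) :
    ∫ t in c..M, deriv (deriv f) t * (t - c) = deriv f M * (M - c) - f M + f c := by
  have hf' : ∀ t, HasDerivAt (fun t => deriv f t * (t - c) - f t)
      (deriv (deriv f) t * (t - c)) t := fun t => by
    have h : HasDerivAt (fun t => deriv f t * (t - c) - f t)
        (deriv (deriv f) t * (t - c) + deriv f t * 1 - deriv f t) t :=
      ((((hf.deriv' (n := 1)).differentiable one_ne_zero t).hasDerivAt.mul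
        ((hasDerivAt_id t).sub_const c)).sub (hf.differentiable two_ne_zero t).hasDerivAt)
    convert h using 1
    ring
  have hc : Continuous fun t => deriv (deriv f) t * (t - c) :=
    (hf.iterate_deriv' 0 2).continuous.mul (continuous_id.sub continuous_const)
  rw [intervalIntegral.integral_eq_sub_of_hasDerivAt (fun t _ => hf' t) (hc.intervalIntegrable c M)]
  ring

theorem setIntegral_Ioc_indicator_Ioi (hmc : m ≤ c) (hcM : c ≤ M) :
    ∫ t in Ioc m M, (Ioi c).indicator g t = ∫ t in c..M, g t := by
  rw [setIntegral_indicator measurableSet_Ioi, Ioc_inter_Ioi, max_eq_right hmc,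
    intervalIntegral.integral_of_le hcM]

theorem Continuous.integrableOn_Ioc_indicator_Ioi (hg : Continuous g) :
    IntegrableOn ((Ioi c).indicator g) (Ioc m M) :=
  hg.integrableOn_Ioc.indicator measurableSet_Ioi

theorem mul_max_sub_zero_eq_indicator (g : ℝ → ℝ) (c t : ℝ) :
    g t * max (t - c) 0 = (Ioi c).indicator (fun s => g s * (s - c)) t := by
  by_cases h : c < t
  · rw [indicator_of_mem (mem_Ioi.mpr h), max_eq_left (by linarith)]
  · rw [indicator_of_notMem (notMem_Ioi.mpr (not_lt.mp h)), max_eq_right (by linarith),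
      mul_zero]

end Calculus

noncomputable def koplienkoShift {ι : Type*} [Fintype ι] (a b x : ι → ℝ) (t : ℝ) : ℝ :=
  (∑ k ∈ Finset.univ.filter fun k => b k < t, x k) - ∑ j, (max (t - b j) 0 - max (t - a j) 0)

noncomputable def koplienkoTerm (a b x t : ℝ) : ℝ :=
  (if b < t then x else 0) - (max (t - b) 0 - max (t - a) 0)

section KoplienkoTerm

variable {a b x t m M : ℝ} {g : ℝ → ℝ}

theorem koplienkoTerm_of_le (ha : t ≤ a) (hb : t ≤ b) : koplienkoTerm a b x t = 0 := by
  simp [koplienkoTerm, not_lt.mpr hb, max_eq_right (sub_nonpos.mpr ha),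
    max_eq_right (sub_nonpos.mpr hb)]

theorem koplienkoTerm_of_lt (ha : a < t) (hb : b < t) :
    koplienkoTerm a b x t = x - (a - b) := by
  rw [koplienkoTerm, if_pos hb, max_eq_left (by linarith), max_eq_left (by linarith)]
  ring

theorem mul_koplienkoTerm (g : ℝ → ℝ) (a b x t : ℝ) :
    g t * koplienkoTerm a b x t = x * (Ioi b).indicator g t
      - (Ioi b).indicator (fun s => g s * (s - b)) t
      + (Ioi a).indicator (fun s => g s * (s - a)) t := by
  rw [← mul_max_sub_zero_eq_indicator, ← mul_max_sub_zero_eq_indicator, koplienkoTerm]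
  simp only [indicator_apply, mem_Ioi]
  split_ifs <;> ring

theorem integrableOn_mul_koplienkoTerm (hg : Continuous g) (a b x : ℝ) :
    IntegrableOn (fun t => g t * koplienkoTerm a b x t) (Ioc m M) := by
  have hb : Continuous fun s => g s * (s - b) := by fun_prop
  have ha : Continuous fun s => g s * (s - a) := by fun_prop
  simp_rw [mul_koplienkoTerm]
  exact ((hg.integrableOn_Ioc_indicator_Ioi.const_mul x).sub
    hb.integrableOn_Ioc_indicator_Ioi).add ha.integrableOn_Ioc_indicator_Ioi

theorem setIntegral_mul_koplienkoTerm (hg : Continuous g) (ha : a ∈ Icc m M) (hb : b ∈ Icc m M)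
    (x : ℝ) :
    ∫ t in Ioc m M, g t * koplienkoTerm a b x t
      = x * (∫ t in b..M, g t) - (∫ t in b..M, g t * (t - b)) + ∫ t in a..M, g t * (t - a) := by
  have hgb : Continuous fun s => g s * (s - b) := by fun_prop
  have hga : Continuous fun s => g s * (s - a) := by fun_prop
  simp_rw [mul_koplienkoTerm]
  rw [integral_add, integral_sub, integral_const_mul, setIntegral_Ioc_indicator_Ioi hb.1 hb.2,
    setIntegral_Ioc_indicator_Ioi hb.1 hb.2, setIntegral_Ioc_indicator_Ioi ha.1 ha.2]
  exacts [hg.integrableOn_Ioc_indicator_Ioi.const_mul x, hgb.integrableOn_Ioc_indicator_Ioi,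
    (hg.integrableOn_Ioc_indicator_Ioi.const_mul x).sub hgb.integrableOn_Ioc_indicator_Ioi,
    hga.integrableOn_Ioc_indicator_Ioi]

end KoplienkoTerm

section KoplienkoShift

variable {ι : Type*} [Fintype ι] {a b x : ι → ℝ} {t : ℝ} {f : ℝ → ℝ}

theorem koplienkoShift_eq_sum_koplienkoTerm (a b x : ι → ℝ) (t : ℝ) :
    koplienkoShift a b x t = ∑ k, koplienkoTerm (a k) (b k) (x k) t := by
  rw [koplienkoShift, Finset.sum_filter, ← Finset.sum_sub_distrib]
  rfl

theorem koplienkoShift_eq_zero_of_le (ha : ∀ k, t ≤ a k) (hb : ∀ k, t ≤ b k) :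
    koplienkoShift a b x t = 0 := by
  rw [koplienkoShift_eq_sum_koplienkoTerm]
  exact Finset.sum_eq_zero fun k _ => koplienkoTerm_of_le (ha k) (hb k)

theorem koplienkoShift_eq_zero_of_lt (hx : ∑ k, x k = ∑ k, a k - ∑ k, b k)
    (ha : ∀ k, a k < t) (hb : ∀ k, b k < t) : koplienkoShift a b x t = 0 := by
  rw [koplienkoShift_eq_sum_koplienkoTerm,
    Finset.sum_congr rfl fun k _ => koplienkoTerm_of_lt (ha k) (hb k)]
  simp only [Finset.sum_sub_distrib, hx, sub_self]

theorem integral_deriv_deriv_mul_koplienkoShift (hf : ContDiff ℝ 2 f)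
    (hx : ∑ k, x k = ∑ k, a k - ∑ k, b k) :
    ∫ t, deriv (deriv f) t * koplienkoShift a b x t
      = ∑ k, f (a k) - ∑ k, f (b k) - ∑ k, deriv f (b k) * x k := by
  obtain ⟨m, hm⟩ := Finite.exists_ge fun k => min (a k) (b k)
  obtain ⟨M, hM⟩ := Finite.exists_le fun k => max (a k) (b k)
  have hsupp : ∀ t ∉ Ioc m M, deriv (deriv f) t * koplienkoShift a b x t = 0 := by
    intro t ht
    rcases not_and_or.mp ht with ht | ht
    · rw [koplienkoShift_eq_zero_of_le (fun k => ((not_lt.mp ht).trans (hm k)).trans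
        (min_le_left _ _)) (fun k => ((not_lt.mp ht).trans (hm k)).trans (min_le_right _ _)),
        mul_zero]
    · rw [koplienkoShift_eq_zero_of_lt hx (fun k => ((le_max_left _ _).trans (hM k)).trans_lt
        (not_le.mp ht)) (fun k => ((le_max_right _ _).trans (hM k)).trans_lt (not_le.mp ht)),
        mul_zero]
  have hc : Continuous (deriv (deriv f)) := (hf.iterate_deriv' 0 2).continuous
  have hIcc : ∀ k, a k ∈ Icc m M ∧ b k ∈ Icc m M := fun k =>
    ⟨⟨(hm k).trans (min_le_left _ _), (le_max_left _ _).trans (hM k)⟩,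
      ⟨(hm k).trans (min_le_right _ _), (le_max_right _ _).trans (hM k)⟩⟩
  rw [← setIntegral_eq_integral_of_forall_compl_eq_zero hsupp]
  simp_rw [koplienkoShift_eq_sum_koplienkoTerm, Finset.mul_sum]
  rw [integral_finsetSum _ fun k _ => integrableOn_mul_koplienkoTerm hc _ _ _]
  simp_rw [fun k => setIntegral_mul_koplienkoTerm hc (hIcc k).1 (hIcc k).2 (x k),
    integral_deriv_deriv_eq_sub hf, integral_deriv_deriv_mul_sub hf]
  calc _ = ∑ k, (f (a k) - f (b k) - deriv f (b k) * x k
        + deriv f M * (x k - (a k - b k))) := Finset.sum_congr rfl fun k _ => by ring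
    _ = _ := by
      simp only [Finset.sum_add_distrib, Finset.sum_sub_distrib, ← Finset.mul_sum, hx]
      ring

end KoplienkoShift

/-- **Koplienko trace formula, finite-dimensional case.** With `X = A − B`,
`(ψ_k)` an orthonormal eigenbasis of `B` with eigenvalues `b_k`, and `a_j` the
eigenvalues of `A`, the Koplienko spectral shift function
`η(λ) = ∑_{k : b_k < λ} ⟨ψ_k, Xψ_k⟩ − ∑_j [(λ−b_j)₊ − (λ−a_j)₊]` vanishes outside
the convex hull of the spectra and satisfies
`Tr f(A) − Tr f(B) − Tr(X·f′(B)) = ∫ f″(λ) η(λ) dλ` for all `C²` functions `f`. -/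
theorem koplienko_trace_formula_finiteDim {n : ℕ} (A B : Matrix (Fin n) (Fin n) ℂ)
    (hA : A.IsHermitian) (hB : B.IsHermitian)
    (X : Matrix (Fin n) (Fin n) ℂ) (hX : X = A - B)
    (ψ : Fin n → (Fin n → ℂ)) (b : Fin n → ℝ)
    (hortho : ∀ k l, star (ψ k) ⬝ᵥ ψ l = if k = l then (1 : ℂ) else 0)
    (heig : ∀ k, B *ᵥ ψ k = (b k : ℂ) • ψ k)
    (η : ℝ → ℝ)
    (hη : ∀ x : ℝ,
      η x = (∑ k ∈ Finset.univ.filter fun k => b k < x, (star (ψ k) ⬝ᵥ (X *ᵥ ψ k)).re)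
          - ∑ j, (max (x - b j) 0 - max (x - hA.eigenvalues j) 0)) :
    (∀ x : ℝ, (∀ j, x ≤ hA.eigenvalues j) → (∀ k, x ≤ b k) → η x = 0) ∧
    (∀ x : ℝ, (∀ j, hA.eigenvalues j < x) → (∀ k, b k < x) → η x = 0) ∧
    (∀ f : ℝ → ℝ, ContDiff ℝ 2 f →
      ((∑ j, f (hA.eigenvalues j) : ℝ) : ℂ) - ((∑ k, f (b k) : ℝ) : ℂ)
          - Matrix.trace (X * IsHermitian.applyFun hB (deriv f))
        = ((∫ x : ℝ, deriv (deriv f) x * η x : ℝ) : ℂ)) := by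
  set x : Fin n → ℝ := fun k => (star (ψ k) ⬝ᵥ (X *ᵥ ψ k)).re
  obtain rfl : η = koplienkoShift hA.eigenvalues b x := funext hη
  have hsum : ∑ k, x k = ∑ j, hA.eigenvalues j - ∑ k, b k := by
    have htr := congrArg Complex.re (trace_sub A B)
    rw [← hX, trace_eq_sum_star_dotProduct_mulVec ψ hortho, hA.trace_eq_sum_eigenvalues,
      trace_eq_sum_of_orthonormal_eigenbasis ψ _ hortho heig] at htr
    simpa using htr
  refine ⟨fun t ha hb => koplienkoShift_eq_zero_of_le ha hb,
    fun t ha hb => koplienkoShift_eq_zero_of_lt hsum ha hb, fun f hf => ?_⟩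
  have hXh : X.IsHermitian := hX ▸ hA.sub hB
  rw [IsHermitian.trace_mul_applyFun hB X _ ψ b hortho heig,
    integral_deriv_deriv_mul_koplienkoShift hf hsum]
  push_cast
  simp only [x, hXh.ofReal_re_star_dotProduct_mulVec]
end
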